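/- arXiv:1910.08991 — 2 statements merged into one kernel-verified Lean document; each statement's English description precedes it below -/
import Mathlib

section
/- Let L_y, L_z > 0, let φ_P, φ_Q ∈ (0, π), and let ℓ : ℕ → ℝ_{>0} be strictly increasing (ℓ(m) represents the length of x^m, e.g. ℓ(m) = m·L_x with L_x > 0). Suppose that for two distinct positive integers m₁ ≠ m₂ we have cosh(ℓ(m)/2)cosh(L_y/2) − sinh(ℓ(m)/2)sinh(L_y/2)cos(φ_P) = cosh(ℓ(m)/2)cosh(L_z/2) − sinh(ℓ(m)/2)sinh(L_z/2)cos(φ_Q) for m = m₁ and m = m₂. Then L_y = L_z and φ_P = φ_Q. -/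
open Real

/-- Proposition "values of m", part (1): equality of 0-smoothing lengths for two distinct
powers forces equal lengths and equal angles. -/
theorem stmt_4 (Ly Lz φP φQ : ℝ) (ℓ : ℕ → ℝ) (hℓpos : ∀ m, 0 < ℓ m) (hℓ : StrictMono ℓ)
    (hLy : 0 < Ly) (hLz : 0 < Lz) (hP : φP ∈ Set.Ioo 0 π) (hQ : φQ ∈ Set.Ioo 0 π)
    (m₁ m₂ : ℕ) (hm₁ : 0 < m₁) (hm₂ : 0 < m₂) (hne : m₁ ≠ m₂)
    (h : ∀ m, m = m₁ ∨ m = m₂ →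
      cosh (ℓ m / 2) * cosh (Ly / 2) - sinh (ℓ m / 2) * sinh (Ly / 2) * cos φP =
      cosh (ℓ m / 2) * cosh (Lz / 2) - sinh (ℓ m / 2) * sinh (Lz / 2) * cos φQ) :
    Ly = Lz ∧ φP = φQ := by
  set t₁ := ℓ m₁ / 2 with ht₁
  set t₂ := ℓ m₂ / 2 with ht₂
  have htne : t₁ ≠ t₂ := by
    simp only [ht₁, ht₂]
    intro hcontra
    exact hne (hℓ.injective (by linarith))
  set A := cosh (Ly / 2) - cosh (Lz / 2) with hA
  set B := sinh (Ly / 2) * cos φP - sinh (Lz / 2) * cos φQ with hB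
  have e1 : cosh t₁ * A = sinh t₁ * B := by have := h m₁ (Or.inl rfl); rw [hA, hB]; linear_combination this
  have e2 : cosh t₂ * A = sinh t₂ * B := by have := h m₂ (Or.inr rfl); rw [hA, hB]; linear_combination this
  have hs1 : 0 < sinh t₁ := Real.sinh_pos_iff.mpr (by rw [ht₁]; exact div_pos (hℓpos m₁) two_pos)
  have hs2 : 0 < sinh t₂ := Real.sinh_pos_iff.mpr (by rw [ht₂]; exact div_pos (hℓpos m₂) two_pos)
  have key : A * Real.sinh (t₁ - t₂) = 0 := by
    rw [Real.sinh_sub]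
    nlinarith [e1, e2]
  have hsne : Real.sinh (t₁ - t₂) ≠ 0 := by
    rw [Real.sinh_ne_zero]
    intro hx; exact htne (by linarith)
  have hA0 : A = 0 := by
    rcases mul_eq_zero.mp key with h' | h'
    · exact h'
    · exact absurd h' hsne
  have hB0 : B = 0 := by
    have := e1
    rw [hA0, mul_zero] at this
    exact (mul_eq_zero.mp this.symm).resolve_left (ne_of_gt hs1)
  have hcosh : cosh (Ly / 2) = cosh (Lz / 2) := by rw [hA] at hA0; linarith
  have hL : Ly = Lz := by
    rcases lt_trichotomy (Ly / 2) (Lz / 2) with h' | h' | h'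
    · have := (Real.cosh_lt_cosh (x := Ly/2) (y := Lz/2)).mpr
        (by rw [abs_of_pos (by linarith : (0:ℝ) < Ly/2), abs_of_pos (by linarith : (0:ℝ) < Lz/2)]; linarith)
      linarith
    · linarith
    · have := (Real.cosh_lt_cosh (x := Lz/2) (y := Ly/2)).mpr
        (by rw [abs_of_pos (by linarith : (0:ℝ) < Lz/2), abs_of_pos (by linarith : (0:ℝ) < Ly/2)]; linarith)
      linarith
  refine ⟨hL, ?_⟩
  have hsinh : 0 < sinh (Ly / 2) := Real.sinh_pos_iff.mpr (by linarith)
  have hcos : cos φP = cos φQ := by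
    rw [hB, hL] at hB0
    have hne' : sinh (Lz / 2) ≠ 0 := ne_of_gt (by rw [← hL]; exact hsinh)
    have h0 : sinh (Lz / 2) * (cos φP - cos φQ) = 0 := by linear_combination hB0
    rcases mul_eq_zero.mp h0 with h' | h'
    · exact absurd h' hne'
    · linarith
  exact Real.injOn_cos ⟨le_of_lt hP.1, le_of_lt hP.2⟩ ⟨le_of_lt hQ.1, le_of_lt hQ.2⟩ hcos
end

section
/- Let L_y, L_z > 0, φ_P, φ_Q ∈ (0, π), and L_x > 0. Suppose that for two distinct positive integers m₁ ≠ m₂, cosh(mL_x/2)cosh(L_y/2) − sinh(mL_x/2)sinh(L_y/2)cos(φ_P) = cosh(mL_x/2)cosh(L_z/2) + sinh(mL_x/2)sinh(L_z/2)cos(φ_Q) holds for m = m₁ and m = m₂. Then L_y = L_z and φ_P + φ_Q = π. -/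
open Real

/-- Key algebraic lemma: from the two equations get A = 0 and B = 0. -/
theorem aux_AB (Lx : ℝ) (hLx : 0 < Lx) (A B : ℝ)
    (m₁ m₂ : ℕ) (hm₁ : 0 < m₁) (hlt : m₁ < m₂)
    (h1 : cosh (m₁ * Lx / 2) * A = sinh (m₁ * Lx / 2) * B)
    (h2 : cosh (m₂ * Lx / 2) * A = sinh (m₂ * Lx / 2) * B) :
    A = 0 ∧ B = 0 := by
  set a := (m₁ : ℝ) * Lx / 2 with ha
  set b := (m₂ : ℝ) * Lx / 2 with hb
  have hapos : 0 < a := by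
    have : (0 : ℝ) < (m₁ : ℝ) := by exact_mod_cast hm₁
    positivity
  have hab : a < b := by
    have : (m₁ : ℝ) < (m₂ : ℝ) := by exact_mod_cast hlt
    have := hLx
    unfold a b
    nlinarith
  have hsinh : sinh (b - a) > 0 := by
    have : 0 < b - a := by linarith
    exact Real.sinh_pos_iff.mpr this
  have hkey : (sinh b * cosh a - cosh b * sinh a) * A = 0 := by
    have e1 := congrArg (· * sinh b) h1
    have e2 := congrArg (· * sinh a) h2
    nlinarith [e1, e2]
  have hA : A = 0 := by
    rw [← Real.sinh_sub] at hkey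
    have := mul_eq_zero.mp hkey
    rcases this with h | h
    · exact absurd h (ne_of_gt hsinh)
    · exact h
  refine ⟨hA, ?_⟩
  have hsa : 0 < sinh a := Real.sinh_pos_iff.mpr hapos
  rw [hA, mul_zero] at h1
  rcases mul_eq_zero.mp h1.symm with h | h
  · exact absurd h (ne_of_gt hsa)
  · exact h

/-- Proposition "values of m", part (2): a 0-smoothing of `x^m` with `y` has the same length
as an ∞-smoothing of `x^m` with `z` for two distinct powers `m` only if the lengths are equal
and the angles are supplementary. -/
theorem stmt_5 (Lx Ly Lz φP φQ : ℝ) (hLx : 0 < Lx) (hLy : 0 < Ly) (hLz : 0 < Lz)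
    (hP : φP ∈ Set.Ioo 0 π) (hQ : φQ ∈ Set.Ioo 0 π)
    (m₁ m₂ : ℕ) (hm₁ : 0 < m₁) (hm₂ : 0 < m₂) (hne : m₁ ≠ m₂)
    (h : ∀ m : ℕ, m = m₁ ∨ m = m₂ →
      cosh (m * Lx / 2) * cosh (Ly / 2) - sinh (m * Lx / 2) * sinh (Ly / 2) * cos φP =
      cosh (m * Lx / 2) * cosh (Lz / 2) + sinh (m * Lx / 2) * sinh (Lz / 2) * cos φQ) :
    Ly = Lz ∧ φP + φQ = π := by
  set A := cosh (Ly / 2) - cosh (Lz / 2) with hA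
  set B := sinh (Ly / 2) * cos φP + sinh (Lz / 2) * cos φQ with hB
  have key : ∀ m : ℕ, m = m₁ ∨ m = m₂ →
      cosh (m * Lx / 2) * A = sinh (m * Lx / 2) * B := by
    intro m hm
    have := h m hm
    unfold A B
    ring_nf
    ring_nf at this
    linarith
  have hAB : A = 0 ∧ B = 0 := by
    rcases lt_or_gt_of_ne hne with hlt | hlt
    · exact aux_AB Lx hLx A B m₁ m₂ hm₁ hlt (key m₁ (Or.inl rfl)) (key m₂ (Or.inr rfl))
    · exact aux_AB Lx hLx A B m₂ m₁ hm₂ hlt (key m₂ (Or.inr rfl)) (key m₁ (Or.inl rfl))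
  have hcosh : cosh (Ly / 2) = cosh (Lz / 2) := by
    have := hAB.1; unfold A at this; linarith
  have hLyz : Ly = Lz := by
    rcases lt_trichotomy (Ly / 2) (Lz / 2) with hc | hc | hc
    · exfalso
      have : cosh (Ly / 2) < cosh (Lz / 2) := by
        rw [Real.cosh_lt_cosh, abs_of_pos (by linarith), abs_of_pos (by linarith)]
        exact hc
      linarith
    · linarith
    · exfalso
      have : cosh (Lz / 2) < cosh (Ly / 2) := by
        rw [Real.cosh_lt_cosh, abs_of_pos (by linarith), abs_of_pos (by linarith)]
        exact hc
      linarith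
  refine ⟨hLyz, ?_⟩
  have hB0 := hAB.2
  rw [hB, hLyz] at hB0
  have hs : 0 < sinh (Lz / 2) := Real.sinh_pos_iff.mpr (by linarith)
  have hcos : cos φP = cos (π - φQ) := by
    rw [Real.cos_pi_sub]
    have : sinh (Lz / 2) * (cos φP + cos φQ) = 0 := by linarith
    rcases mul_eq_zero.mp this with h' | h'
    · exact absurd h' (ne_of_gt hs)
    · linarith
  have hPmem : φP ∈ Set.Icc 0 π := ⟨le_of_lt hP.1, le_of_lt hP.2⟩
  have hQmem : π - φQ ∈ Set.Icc 0 π := ⟨by linarith [hQ.2], by linarith [hQ.1]⟩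
  have := Real.injOn_cos hPmem hQmem hcos
  linarith
end
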